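/- Let $\eta > 0$, and for $j = 1, 2$ let $k_j > 0$, $\varepsilon_j > 0$. Let $v_1, v_2 : [0,1] \to \mathbb{C}$ be twice continuously differentiable solutions of $v_j'' + k_j^2 v_j = 0$ on $(0,1)$ in a 1D two-interval model, satisfying at the common point $x = c \in (0,1)$ (with $v_1$ on $[0,c]$, $v_2$ on $[c,1]$): $\varepsilon_1^{-1} v_1'(c) + i\eta v_1(c) = \varepsilon_2^{-1}(-v_2'(c)) - i\eta v_2(c)$ and $\varepsilon_1^{-1} v_1'(c) - i\eta v_1(c) = \varepsilon_2^{-1}(-v_2'(c)) + i\eta v_2(c)$, together with zero impedance conditions $-\varepsilon_1^{-1} v_1'(0) - i\eta v_1(0) = 0$ and $\varepsilon_2^{-1} v_2'(1) - i\eta v_2(1) = 0$. Then $v_1 \equiv 0$ and $v_2 \equiv 0$. -/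

import Mathlib

/-! The flux `Im (v' * conj v)` of a solution of `v'' + k² v = 0` is conserved, its derivative
being `Im (|v'|² - k² |v|²) = 0`. The two transmission conditions say `v₁ c = -v₂ c` and
`ε₁⁻¹ v₁' c = -ε₂⁻¹ v₂' c`, so the scaled fluxes `ε⁻¹ Im (v' * conj v)` of `v₁` and `v₂` agree
at `c`, while the impedance conditions make them `-η |v₁ 0|²` at `0` and `η |v₂ 1|²` at `1`.
Hence both solutions have zero Cauchy data at the outer endpoint, and conservation of the energy
`|v'|² + k² |v|²` makes them vanish identically. -/

open Set Complex ComplexConjugate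

theorem eq_of_mem_Icc_of_hasDerivAt_zero {f : ℝ → ℝ} {a b : ℝ} (hf : ContinuousOn f (Icc a b))
    (hf' : ∀ x ∈ Ioo a b, HasDerivAt f 0 x) {x y : ℝ} (hx : x ∈ Icc a b) (hy : y ∈ Icc a b) :
    f x = f y := by
  have hd : ∀ x ∈ interior (Icc a b), HasDerivWithinAt f 0 (interior (Icc a b)) x := by
    rw [interior_Icc]
    exact fun x hx ↦ (hf' x hx).hasDerivWithinAt
  have hmono := monotoneOn_of_hasDerivWithinAt_nonneg (convex_Icc a b) hf hd fun _ _ ↦ le_rfl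
  have hanti := antitoneOn_of_hasDerivWithinAt_nonpos (convex_Icc a b) hf hd fun _ _ ↦ le_rfl
  rcases le_total x y with hxy | hxy
  · exact le_antisymm (hmono hx hy hxy) (hanti hx hy hxy)
  · exact le_antisymm (hanti hy hx hxy) (hmono hy hx hxy)

section

variable {E : Type*} [NormedAddCommGroup E] [NormedSpace ℝ E] {v : ℝ → E} {a b x : ℝ}

theorem ContDiffOn.hasDerivAt_of_mem_Ioo {n : WithTop ℕ∞} (hv : ContDiffOn ℝ n v (Icc a b))
    (hn : n ≠ 0) (hx : x ∈ Ioo a b) : HasDerivAt v (derivWithin v (Icc a b) x) x :=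
  (hv.differentiableOn hn x (Ioo_subset_Icc_self hx)).hasDerivWithinAt.hasDerivAt
    (Icc_mem_nhds hx.1 hx.2)

theorem ContDiffOn.hasDerivAt_derivWithin_of_mem_Ioo (hv : ContDiffOn ℝ 2 v (Icc a b))
    (hab : a < b) (hx : x ∈ Ioo a b) :
    HasDerivAt (derivWithin v (Icc a b)) (iteratedDerivWithin 2 v (Icc a b) x) x := by
  rw [iteratedDerivWithin_succ, iteratedDerivWithin_one]
  exact (hv.derivWithin (uniqueDiffOn_Icc hab) (m := 1) (by norm_num)).hasDerivAt_of_mem_Ioo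
    one_ne_zero hx

end

section Helmholtz

variable {a b k : ℝ} {v : ℝ → ℂ}

theorem helmholtz_im_derivWithin_mul_conj_eq (hab : a < b) (hv : ContDiffOn ℝ 2 v (Icc a b))
    (heq : ∀ x ∈ Ioo a b, iteratedDerivWithin 2 v (Icc a b) x + (k : ℂ) ^ 2 * v x = 0) :
    (derivWithin v (Icc a b) b * conj (v b)).im = (derivWithin v (Icc a b) a * conj (v a)).im := by
  set flux : ℝ → ℝ := fun x ↦ (derivWithin v (Icc a b) x * conj (v x)).im
  refine eq_of_mem_Icc_of_hasDerivAt_zero (f := flux) ?_ (fun x hx ↦ ?_) (right_mem_Icc.2 hab.le)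
    (left_mem_Icc.2 hab.le)
  · exact continuous_im.comp_continuousOn
      ((hv.continuousOn_derivWithin (uniqueDiffOn_Icc hab) one_le_two).mul
        (continuous_conj.comp_continuousOn hv.continuousOn))
  · have h := ((hv.hasDerivAt_derivWithin_of_mem_Ioo hab hx).mul
      (hv.hasDerivAt_of_mem_Ioo two_ne_zero hx).star)
    refine (imCLM.hasFDerivAt.comp_hasDerivAt x h).congr_deriv ?_
    rw [imCLM_apply, eq_neg_of_add_eq_zero_left (heq x hx), neg_mul, mul_assoc]
    simp [Complex.mul_conj, ← ofReal_pow]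

theorem helmholtz_eq_zero_of_eq_zero_of_derivWithin_eq_zero (hab : a < b) (hk : k ≠ 0)
    (hv : ContDiffOn ℝ 2 v (Icc a b))
    (heq : ∀ x ∈ Ioo a b, iteratedDerivWithin 2 v (Icc a b) x + (k : ℂ) ^ 2 * v x = 0)
    {y : ℝ} (hy : y ∈ Icc a b) (hvy : v y = 0) (hdy : derivWithin v (Icc a b) y = 0) :
    ∀ x ∈ Icc a b, v x = 0 := by
  set energy : ℝ → ℝ := fun x ↦ ‖derivWithin v (Icc a b) x‖ ^ 2 + k ^ 2 * ‖v x‖ ^ 2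
  have henergy : ∀ x ∈ Icc a b, energy x = energy y := by
    refine fun x hx ↦ eq_of_mem_Icc_of_hasDerivAt_zero ?_ (fun t ht ↦ ?_) hx hy
    · exact ((hv.continuousOn_derivWithin (uniqueDiffOn_Icc hab) one_le_two).norm.pow 2).add
        (continuousOn_const.mul (hv.continuousOn.norm.pow 2))
    · refine ((hv.hasDerivAt_derivWithin_of_mem_Ioo hab ht).norm_sq.add
        ((hv.hasDerivAt_of_mem_Ioo two_ne_zero ht).norm_sq.const_mul (k ^ 2))).congr_deriv ?_
      rw [eq_neg_of_add_eq_zero_left (heq t ht), ← ofReal_pow, ← real_smul,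
        inner_neg_right, real_inner_smul_right, real_inner_comm]
      ring
  intro x hx
  have h0 : energy x = 0 := by simp [henergy x hx, energy, hvy, hdy]
  have hpot : k ^ 2 * ‖v x‖ ^ 2 = 0 := by
    apply le_antisymm _ (by positivity)
    linarith [sq_nonneg ‖derivWithin v (Icc a b) x‖]
  simpa [hk] using hpot

end Helmholtz

theorem im_mul_conj_of_ofReal_mul_eq_I_mul {r t : ℝ} {w z : ℂ} (h : (r : ℂ) * w = I * t * z) :
    r * (w * conj z).im = t * normSq z := by
  rw [← im_ofReal_mul, ← mul_assoc, h, mul_assoc, mul_conj]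
  simp

theorem ddm_1d_transmission_uniqueness
    (η k₁ k₂ ε₁ ε₂ c : ℝ) (hη : 0 < η) (hk₁ : 0 < k₁) (hk₂ : 0 < k₂)
    (hε₁ : 0 < ε₁) (hε₂ : 0 < ε₂) (hc : c ∈ Ioo (0 : ℝ) 1)
    (v₁ v₂ : ℝ → ℂ)
    (hv₁ : ContDiffOn ℝ 2 v₁ (Icc 0 c)) (hv₂ : ContDiffOn ℝ 2 v₂ (Icc c 1))
    (heq₁ : ∀ x ∈ Ioo 0 c,
      iteratedDerivWithin 2 v₁ (Icc 0 c) x + (k₁ : ℂ) ^ 2 * v₁ x = 0)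
    (heq₂ : ∀ x ∈ Ioo c 1,
      iteratedDerivWithin 2 v₂ (Icc c 1) x + (k₂ : ℂ) ^ 2 * v₂ x = 0)
    (hmatch₁ : (ε₁ : ℂ)⁻¹ * derivWithin v₁ (Icc 0 c) c + Complex.I * (η : ℂ) * v₁ c
      = (ε₂ : ℂ)⁻¹ * (-derivWithin v₂ (Icc c 1) c) - Complex.I * (η : ℂ) * v₂ c)
    (hmatch₂ : (ε₁ : ℂ)⁻¹ * derivWithin v₁ (Icc 0 c) c - Complex.I * (η : ℂ) * v₁ c
      = (ε₂ : ℂ)⁻¹ * (-derivWithin v₂ (Icc c 1) c) + Complex.I * (η : ℂ) * v₂ c)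
    (hbc₀ : -(ε₁ : ℂ)⁻¹ * derivWithin v₁ (Icc 0 c) 0 - Complex.I * (η : ℂ) * v₁ 0 = 0)
    (hbc₁ : (ε₂ : ℂ)⁻¹ * derivWithin v₂ (Icc c 1) 1 - Complex.I * (η : ℂ) * v₂ 1 = 0) :
    (∀ x ∈ Icc 0 c, v₁ x = 0) ∧ (∀ x ∈ Icc c 1, v₂ x = 0) := by
  obtain ⟨hc₀, hc₁⟩ := hc
  set d₁ := derivWithin v₁ (Icc 0 c)
  set d₂ := derivWithin v₂ (Icc c 1)
  have hval : v₁ c = -v₂ c := by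
    have h : I * η * (v₁ c + v₂ c) = 0 := by linear_combination (hmatch₁ - hmatch₂) / 2
    simpa [hη.ne', add_eq_zero_iff_eq_neg] using h
  have hder : ((ε₁⁻¹ : ℝ) : ℂ) * d₁ c = -(((ε₂⁻¹ : ℝ) : ℂ) * d₂ c) := by
    push_cast; linear_combination (hmatch₁ + hmatch₂) / 2
  have himp₀ : ((ε₁⁻¹ : ℝ) : ℂ) * d₁ 0 = I * ((-η : ℝ) : ℂ) * v₁ 0 := by
    push_cast; linear_combination -hbc₀
  have himp₁ : ((ε₂⁻¹ : ℝ) : ℂ) * d₂ 1 = I * (η : ℂ) * v₂ 1 := by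
    push_cast; linear_combination hbc₁
  have hflux : -η * normSq (v₁ 0) = η * normSq (v₂ 1) := calc
    -η * normSq (v₁ 0) = ε₁⁻¹ * (d₁ 0 * conj (v₁ 0)).im :=
      (im_mul_conj_of_ofReal_mul_eq_I_mul himp₀).symm
    _ = ε₁⁻¹ * (d₁ c * conj (v₁ c)).im := by
      rw [helmholtz_im_derivWithin_mul_conj_eq hc₀ hv₁ heq₁]
    _ = ε₂⁻¹ * (d₂ c * conj (v₂ c)).im := by
      rw [← im_ofReal_mul, ← im_ofReal_mul, ← mul_assoc, ← mul_assoc, hder, hval]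
      simp
    _ = ε₂⁻¹ * (d₂ 1 * conj (v₂ 1)).im := by
      rw [helmholtz_im_derivWithin_mul_conj_eq hc₁ hv₂ heq₂]
    _ = η * normSq (v₂ 1) := im_mul_conj_of_ofReal_mul_eq_I_mul himp₁
  obtain ⟨hv₁0, hv₂1⟩ : v₁ 0 = 0 ∧ v₂ 1 = 0 := by
    simp only [← normSq_eq_zero]
    constructor <;> nlinarith [normSq_nonneg (v₁ 0), normSq_nonneg (v₂ 1)]
  have hd₁0 : d₁ 0 = 0 := by simpa [hv₁0, hε₁.ne'] using himp₀
  have hd₂1 : d₂ 1 = 0 := by simpa [hv₂1, hε₂.ne'] using himp₁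
  exact ⟨helmholtz_eq_zero_of_eq_zero_of_derivWithin_eq_zero hc₀ hk₁.ne' hv₁ heq₁
      (left_mem_Icc.2 hc₀.le) hv₁0 hd₁0,
    helmholtz_eq_zero_of_eq_zero_of_derivWithin_eq_zero hc₁ hk₂.ne' hv₂ heq₂
      (right_mem_Icc.2 hc₁.le) hv₂1 hd₂1⟩
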